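/- For a real function $f$ on a nondegenerate compact interval $I$ of finite total variation, $\mathrm{RV}_I(f)=0$ if and only if $f$ is affine on $I$ (i.e. there exist $a,b\in\mathbb{R}$ with $f(x)=ax+b$ for all $x\in I$). -/

import Mathlib

open scoped ENNReal

open Set
open scoped ENNReal

noncomputable def RV (f : ℝ → ℝ) (s : Set ℝ) : ℝ≥0∞ :=
  ⨅ a : ℝ, eVariationOn (fun x => f x - a * x) s

theorem RV_eq_zero_iff_affine (f : ℝ → ℝ) (u v : ℝ) (huv : u < v)
    (hfin : eVariationOn f (Icc u v) ≠ ⊤) :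
    RV f (Icc u v) = 0 ↔ ∃ a b : ℝ, ∀ x ∈ Icc u v, f x = a * x + b := by
  constructor
  · intro h
    set a₀ := (f v - f u) / (v - u) with ha₀
    refine ⟨a₀, f u - a₀ * u, ?_⟩
    intro x hx
    have hvu : (0:ℝ) < v - u := sub_pos.mpr huv
    have key : ∀ ε : ℝ, 0 < ε → |f x - f u - a₀ * (x - u)| ≤ 2 * ε := by
      intro ε hε
      have h0 : RV f (Icc u v) < ENNReal.ofReal ε := by
        rw [h]; exact ENNReal.ofReal_pos.mpr hε
      rw [RV, iInf_lt_iff] at h0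
      obtain ⟨a, ha⟩ := h0
      have hbound : ∀ y ∈ Icc u v, |(f y - a * y) - (f u - a * u)| ≤ ε := by
        intro y hy
        have h1 := eVariationOn.edist_le (fun x => f x - a * x) hy
          (left_mem_Icc.mpr huv.le)
        have h2 : edist (f y - a * y) (f u - a * u) < ENNReal.ofReal ε :=
          lt_of_le_of_lt h1 ha
        rw [edist_dist] at h2
        have h3 := (ENNReal.ofReal_lt_ofReal_iff hε).mp h2
        rw [Real.dist_eq] at h3
        exact h3.le
      have hx1 : |f x - f u - a * (x - u)| ≤ ε := by
        have := hbound x hx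
        have he : (f x - a * x) - (f u - a * u) = f x - f u - a * (x - u) := by ring
        rwa [he] at this
      have hv1 : |f v - f u - a * (v - u)| ≤ ε := by
        have := hbound v (right_mem_Icc.mpr huv.le)
        have he : (f v - a * v) - (f u - a * u) = f v - f u - a * (v - u) := by ring
        rwa [he] at this
      have ha₀v : a₀ * (v - u) = f v - f u := div_mul_cancel₀ _ hvu.ne'
      have h3 : |a₀ - a| * (v - u) ≤ ε := by
        have he : (a₀ - a) * (v - u) = f v - f u - a * (v - u) := by
          rw [sub_mul, ha₀v]
        have := hv1
        rw [← he, abs_mul, abs_of_pos hvu] at this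
        exact this
      have hxu : |x - u| ≤ v - u := by
        rw [abs_of_nonneg (sub_nonneg.mpr hx.1)]
        linarith [hx.2]
      calc |f x - f u - a₀ * (x - u)|
          = |(f x - f u - a * (x - u)) + (a - a₀) * (x - u)| := by ring_nf
        _ ≤ |f x - f u - a * (x - u)| + |(a - a₀) * (x - u)| := abs_add_le _ _
        _ ≤ ε + |a₀ - a| * (v - u) := by
            have : |(a - a₀) * (x - u)| ≤ |a₀ - a| * (v - u) := by
              rw [abs_mul, abs_sub_comm a a₀]
              exact mul_le_mul_of_nonneg_left hxu (abs_nonneg _)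
            linarith
        _ ≤ 2 * ε := by linarith
    have hd : |f x - f u - a₀ * (x - u)| = 0 := by
      by_contra hne
      have hpos : 0 < |f x - f u - a₀ * (x - u)| :=
        lt_of_le_of_ne (abs_nonneg _) (Ne.symm hne)
      have := key (|f x - f u - a₀ * (x - u)| / 4) (by positivity)
      linarith
    have := abs_eq_zero.mp hd
    linear_combination this
  · rintro ⟨a, b, hab⟩
    refine le_antisymm ?_ (zero_le)
    have hz : eVariationOn (fun x => f x - a * x) (Icc u v) = 0 := by
      rw [eVariationOn.eq_zero_iff]
      intro x hx y hy
      simp only [hab x hx, hab y hy]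
      ring_nf
      exact edist_self b
    exact le_trans (iInf_le _ a) hz.le
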